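/- Let W be a finite set of workers partitioned into females W^F and males W^M, with an injective score function s. Then the NSW rule φ^NSW is aggregation independent: for all even quotas q ≥ q₁ ≥ 0 with q₁ and q − q₁ even, and any set A of previously hired workers such that at least q/2 workers of each gender remain available, hiring q workers at once selects the same workers as hiring q₁ and then q − q₁. Moreover, if the minority group M is taken to be one of the two genders and the minority ratio satisfies m ≤ 1/2, then for every sequence of hires with even quotas in which enough workers of each gender remain available in every round, the set of workers selected by φ^NSW respects minority rights for the total quota. -/
import Mathlib


open Finset

variable {ι : Type*} [DecidableEq ι]

/-- The (up to) `k` highest-scoring elements of `X`, chosen greedily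
(with injective scores this is the set of the `k` highest-scoring elements). -/
noncomputable def topOf (s : ι → ℝ) : ℕ → Finset ι → Finset ι
  | 0, _ => ∅
  | k + 1, X =>
    if h : X.Nonempty then
      insert (X.exists_max_image s h).choose
        (topOf s k (X.erase (X.exists_max_image s h).choose))
    else ∅

/-- `H` respects minority rights for quota `q` (w.r.t. minorities `M` and ratio `m`):
either `|M| ≥ m·q` and the fraction of minorities in `H` is at least `m`
(stated multiplicatively as `ω(H) ≥ m·|H|`), or `|M| < m·q` and `M ⊆ H`. -/
def RespectsRightsSet (M : Finset ι) (m : ℝ) (q : ℕ) (H : Finset ι) : Prop :=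
  (m * (q : ℝ) ≤ (M.card : ℝ) ∧ m * (H.card : ℝ) ≤ ((H ∩ M).card : ℝ)) ∨
  ((M.card : ℝ) < m * (q : ℝ) ∧ M ⊆ H)

/-- `H` is minority fair (w.r.t. workers `W`, minorities `M`, scores `s`, ratio `m`):
(i) within `M` and within `W ∖ M` selection follows the scores; (ii) no minority with a
higher score is left out while a non-minority is hired; (iii) a lower-scoring minority is
hired over a higher-scoring non-minority only if the minority fraction of `H` is at most
`m` (stated multiplicatively as `ω(H) ≤ m·|H|`). -/
def MinorityFairSet (W M : Finset ι) (s : ι → ℝ) (m : ℝ) (H : Finset ι) : Prop :=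
  (∀ w ∈ M, ∀ w' ∈ M, w ∈ H → w' ∉ H → s w' < s w) ∧
  (∀ w ∈ W \ M, ∀ w' ∈ W \ M, w ∈ H → w' ∉ H → s w' < s w) ∧
  (∀ w ∈ W \ M, ∀ w' ∈ M, s w < s w' → w ∈ H → w' ∈ H) ∧
  ((∃ w ∈ W \ M, ∃ w' ∈ M, s w' < s w ∧ w ∉ H ∧ w' ∈ H) →
    ((H ∩ M).card : ℝ) ≤ m * (H.card : ℝ))

/-- The NSW rule `φ^NSW`: in a round with even quota `q` it hires the `q/2`
highest-scoring available female workers (`F`) and the `q/2` highest-scoring available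
male workers (`Mw`); hired workers are removed from the pool after each round. -/
noncomputable def phiNSW (s : ι → ℝ) (F Mw : Finset ι) : Finset ι → List ℕ → Finset ι
  | _, [] => ∅
  | P, q :: rest =>
    let H := topOf s (q / 2) (P ∩ F) ∪ topOf s (q / 2) (P ∩ Mw)
    H ∪ phiNSW s F Mw (P \ H) rest

/-- In every round of the sequence at least `q/2` workers of each gender remain
available. -/
def NSWfeasible (s : ι → ℝ) (F Mw : Finset ι) : Finset ι → List ℕ → Prop
  | _, [] => True
  | P, q :: rest =>
    q / 2 ≤ (P ∩ F).card ∧ q / 2 ≤ (P ∩ Mw).card ∧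
      NSWfeasible s F Mw
        (P \ (topOf s (q / 2) (P ∩ F) ∪ topOf s (q / 2) (P ∩ Mw))) rest

lemma topOf_subset (s : ι → ℝ) : ∀ (k : ℕ) (X : Finset ι), topOf s k X ⊆ X := by
  intro k
  induction k with
  | zero => intro X; simp [topOf]
  | succ k ih =>
    intro X
    rw [topOf]
    split
    · next h =>
      exact Finset.insert_subset (X.exists_max_image s h).choose_spec.1
        ((ih _).trans (Finset.erase_subset _ _))
    · exact Finset.empty_subset _

lemma topOf_empty (s : ι → ℝ) (k : ℕ) : topOf s k (∅ : Finset ι) = ∅ := by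
  cases k with
  | zero => rfl
  | succ k => rw [topOf, dif_neg (by simp)]

lemma topOf_card (s : ι → ℝ) : ∀ (k : ℕ) (X : Finset ι), k ≤ X.card →
    (topOf s k X).card = k := by
  intro k
  induction k with
  | zero => intro X _; simp [topOf]
  | succ k ih =>
    intro X hk
    have hne : X.Nonempty := Finset.card_pos.mp (by omega)
    rw [topOf, dif_pos hne]
    have hxX : (X.exists_max_image s hne).choose ∈ X :=
      (X.exists_max_image s hne).choose_spec.1
    have hnot : (X.exists_max_image s hne).choose ∉
        topOf s k (X.erase (X.exists_max_image s hne).choose) :=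
      fun h => (Finset.mem_erase.mp (topOf_subset s k _ h)).1 rfl
    rw [Finset.card_insert_of_notMem hnot,
      ih _ (by rw [Finset.card_erase_of_mem hxX]; omega)]

lemma topOf_add (s : ι → ℝ) : ∀ (a b : ℕ) (X : Finset ι),
    topOf s (a + b) X = topOf s a X ∪ topOf s b (X \ topOf s a X) := by
  intro a
  induction a with
  | zero => intro b X; simp [topOf]
  | succ a ih =>
    intro b X
    by_cases h : X.Nonempty
    · have hab : a + 1 + b = (a + b) + 1 := by omega
      rw [hab, topOf, dif_pos h, show topOf s (a+1) X =
        insert (X.exists_max_image s h).choose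
          (topOf s a (X.erase (X.exists_max_image s h).choose)) from by
          rw [topOf, dif_pos h], ih]
      rw [Finset.insert_union]
      have hset : X.erase (X.exists_max_image s h).choose \
            topOf s a (X.erase (X.exists_max_image s h).choose) =
          X \ insert (X.exists_max_image s h).choose
            (topOf s a (X.erase (X.exists_max_image s h).choose)) := by
        ext y
        simp only [Finset.mem_sdiff, Finset.mem_erase, Finset.mem_insert]
        tauto
      rw [hset]
    · rw [Finset.not_nonempty_iff_eq_empty] at h
      subst h
      simp [topOf_empty]

lemma phiNSW_spec (s : ι → ℝ) (F Mw : Finset ι) (hdisj : Disjoint F Mw) :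
    ∀ (lam : List ℕ) (P : Finset ι), (∀ q ∈ lam, Even q) → NSWfeasible s F Mw P lam →
      phiNSW s F Mw P lam ⊆ P ∧
      2 * ((phiNSW s F Mw P lam ∩ F).card) = lam.sum ∧
      2 * ((phiNSW s F Mw P lam ∩ Mw).card) = lam.sum := by
  intro lam
  induction lam with
  | nil => intro P _ _; simp [phiNSW]
  | cons q rest ih =>
    intro P heven hfeas
    obtain ⟨hF, hM, hfeas'⟩ := hfeas
    have hq : Even q := heven q (by simp)
    set TF := topOf s (q / 2) (P ∩ F) with hTFdef
    set TM := topOf s (q / 2) (P ∩ Mw) with hTMdef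
    obtain ⟨hRsub, hRF, hRM⟩ := ih (P \ (TF ∪ TM))
      (fun q' hq' => heven q' (by simp [hq'])) hfeas'
    set R := phiNSW s F Mw (P \ (TF ∪ TM)) rest with hRdef
    have hshow : phiNSW s F Mw P (q :: rest) = (TF ∪ TM) ∪ R := rfl
    have hTFsub : TF ⊆ P ∩ F := topOf_subset s _ _
    have hTMsub : TM ⊆ P ∩ Mw := topOf_subset s _ _
    have hTFcard : TF.card = q / 2 := topOf_card s _ _ hF
    have hTMcard : TM.card = q / 2 := topOf_card s _ _ hM
    rw [hshow]
    have hsub : (TF ∪ TM) ∪ R ⊆ P := by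
      apply Finset.union_subset
      · exact Finset.union_subset (hTFsub.trans Finset.inter_subset_left)
          (hTMsub.trans Finset.inter_subset_left)
      · exact hRsub.trans (Finset.sdiff_subset)
    refine ⟨hsub, ?_, ?_⟩
    · have h1 : ((TF ∪ TM) ∪ R) ∩ F = TF ∪ (R ∩ F) := by
        ext y
        simp only [Finset.mem_inter, Finset.mem_union]
        constructor
        · rintro ⟨(hy | hy) | hy, hyF⟩
          · exact Or.inl hy
          · exact absurd hyF (Finset.disjoint_left.mp hdisj.symm
              (Finset.mem_inter.mp (hTMsub hy)).2)
          · exact Or.inr ⟨hy, hyF⟩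
        · rintro (hy | ⟨hy, hyF⟩)
          · exact ⟨Or.inl (Or.inl hy), (Finset.mem_inter.mp (hTFsub hy)).2⟩
          · exact ⟨Or.inr hy, hyF⟩
      have hdis : Disjoint TF (R ∩ F) := by
        apply Finset.disjoint_left.mpr
        intro y hy hy'
        have := hRsub (Finset.mem_inter.mp hy').1
        exact (Finset.mem_sdiff.mp this).2 (Finset.mem_union_left _ hy)
      rw [h1, Finset.card_union_of_disjoint hdis, hTFcard, List.sum_cons]
      obtain ⟨c, hc⟩ := hq
      omega
    · have h1 : ((TF ∪ TM) ∪ R) ∩ Mw = TM ∪ (R ∩ Mw) := by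
        ext y
        simp only [Finset.mem_inter, Finset.mem_union]
        constructor
        · rintro ⟨(hy | hy) | hy, hyM⟩
          · exact absurd hyM (Finset.disjoint_left.mp hdisj
              (Finset.mem_inter.mp (hTFsub hy)).2)
          · exact Or.inl hy
          · exact Or.inr ⟨hy, hyM⟩
        · rintro (hy | ⟨hy, hyM⟩)
          · exact ⟨Or.inl (Or.inr hy), (Finset.mem_inter.mp (hTMsub hy)).2⟩
          · exact ⟨Or.inr hy, hyM⟩
      have hdis : Disjoint TM (R ∩ Mw) := by
        apply Finset.disjoint_left.mpr
        intro y hy hy'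
        have := hRsub (Finset.mem_inter.mp hy').1
        exact (Finset.mem_sdiff.mp this).2 (Finset.mem_union_right _ hy)
      rw [h1, Finset.card_union_of_disjoint hdis, hTMcard, List.sum_cons]
      obtain ⟨c, hc⟩ := hq
      omega

/-- The NSW rule is aggregation independent: for all even quotas
`q ≥ q₁ ≥ 0` with `q₁` and `q − q₁` even, and any set `A` of previously hired workers
such that at least `q/2` workers of each gender remain available, hiring `q` workers at
once selects the same workers as hiring `q₁` and then `q − q₁`.  Moreover, if the
minority group `M` is one of the two genders and `m ≤ 1/2`, then for every sequence of
hires with even quotas in which enough workers of each gender remain available in every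
round, the set selected by `φ^NSW` respects minority rights for the total quota. -/
theorem phiNSW_aggindep_and_rights (W F Mw : Finset ι) (s : ι → ℝ)
    (hpart : F ∪ Mw = W) (hdisj : Disjoint F Mw) (hs : Set.InjOn s ↑W) :
    (∀ (A : Finset ι) (q q₁ : ℕ), A ⊆ W → q₁ ≤ q → Even q → Even q₁ → Even (q - q₁) →
      q / 2 ≤ ((W \ A) ∩ F).card → q / 2 ≤ ((W \ A) ∩ Mw).card →
      phiNSW s F Mw (W \ A) [q] = phiNSW s F Mw (W \ A) [q₁, q - q₁]) ∧
    (∀ (M : Finset ι) (m : ℝ), (M = F ∨ M = Mw) → 0 ≤ m → m ≤ 1 / 2 →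
      ∀ lam : List ℕ, (∀ q ∈ lam, Even q) → NSWfeasible s F Mw W lam →
        RespectsRightsSet M m lam.sum (phiNSW s F Mw W lam)) := by
  constructor
  · -- aggregation independence
    intro A q q₁ hAW hq₁q hq hq₁ hqq₁ hcF hcM
    set P := W \ A with hP
    obtain ⟨a, ha⟩ := hq
    obtain ⟨b, hb⟩ := hq₁
    obtain ⟨c, hc⟩ := hqq₁
    have hsplit : q / 2 = q₁ / 2 + (q - q₁) / 2 := by omega
    set TF₁ := topOf s (q₁ / 2) (P ∩ F) with hTF₁
    set TM₁ := topOf s (q₁ / 2) (P ∩ Mw) with hTM₁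
    have hTF₁sub : TF₁ ⊆ P ∩ F := topOf_subset s _ _
    have hTM₁sub : TM₁ ⊆ P ∩ Mw := topOf_subset s _ _
    have hPF : (P \ (TF₁ ∪ TM₁)) ∩ F = (P ∩ F) \ TF₁ := by
      ext y
      simp only [Finset.mem_inter, Finset.mem_sdiff, Finset.mem_union]
      constructor
      · rintro ⟨⟨hyP, hy⟩, hyF⟩; exact ⟨⟨hyP, hyF⟩, fun h => hy (Or.inl h)⟩
      · rintro ⟨⟨hyP, hyF⟩, hy⟩
        refine ⟨⟨hyP, ?_⟩, hyF⟩
        rintro (h | h)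
        · exact hy h
        · exact Finset.disjoint_left.mp hdisj hyF (Finset.mem_inter.mp (hTM₁sub h)).2
    have hPM : (P \ (TF₁ ∪ TM₁)) ∩ Mw = (P ∩ Mw) \ TM₁ := by
      ext y
      simp only [Finset.mem_inter, Finset.mem_sdiff, Finset.mem_union]
      constructor
      · rintro ⟨⟨hyP, hy⟩, hyM⟩; exact ⟨⟨hyP, hyM⟩, fun h => hy (Or.inr h)⟩
      · rintro ⟨⟨hyP, hyM⟩, hy⟩
        refine ⟨⟨hyP, ?_⟩, hyM⟩
        rintro (h | h)
        · exact Finset.disjoint_right.mp hdisj hyM (Finset.mem_inter.mp (hTF₁sub h)).2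
        · exact hy h
    have hL : phiNSW s F Mw P [q] =
        topOf s (q / 2) (P ∩ F) ∪ topOf s (q / 2) (P ∩ Mw) := by
      show _ ∪ phiNSW s F Mw _ [] = _
      rw [show ∀ X, phiNSW s F Mw X [] = ∅ from fun _ => rfl, Finset.union_empty]
    have hR : phiNSW s F Mw P [q₁, q - q₁] =
        (TF₁ ∪ TM₁) ∪
          (topOf s ((q - q₁) / 2) ((P \ (TF₁ ∪ TM₁)) ∩ F) ∪
           topOf s ((q - q₁) / 2) ((P \ (TF₁ ∪ TM₁)) ∩ Mw)) := by
      show (TF₁ ∪ TM₁) ∪ phiNSW s F Mw (P \ (TF₁ ∪ TM₁)) [q - q₁] = _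
      show (TF₁ ∪ TM₁) ∪ (_ ∪ phiNSW s F Mw _ []) = _
      rw [show ∀ X, phiNSW s F Mw X [] = ∅ from fun _ => rfl, Finset.union_empty]
    rw [hL, hR, hPF, hPM, hsplit, topOf_add, topOf_add]
    ext y
    simp only [Finset.mem_union]
    tauto
  · -- minority rights
    intro M m hMgen hm0 hm lam heven hfeas
    obtain ⟨hHsub, hHF, hHM⟩ := phiNSW_spec s F Mw hdisj lam W heven hfeas
    set H := phiNSW s F Mw W lam with hHdef
    set q := lam.sum with hqdef
    -- total cardinality
    have hHW : H = (H ∩ F) ∪ (H ∩ Mw) := by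
      ext y
      simp only [Finset.mem_union, Finset.mem_inter]
      constructor
      · intro hy
        have hyW : y ∈ W := hHsub hy
        rw [← hpart, Finset.mem_union] at hyW
        tauto
      · tauto
    have hdisHF : Disjoint (H ∩ F) (H ∩ Mw) :=
      hdisj.mono Finset.inter_subset_right Finset.inter_subset_right
    have hHcard : 2 * H.card = 2 * q := by
      conv_lhs => rw [hHW]
      rw [Finset.card_union_of_disjoint hdisHF]
      omega
    have hHcard' : H.card = q := by omega
    have hHMcard : 2 * (H ∩ M).card = q := by
      rcases hMgen with rfl | rfl
      · exact hHF
      · exact hHM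
    have hHMle : (H ∩ M).card ≤ M.card :=
      Finset.card_le_card Finset.inter_subset_right
    -- real-number bookkeeping
    have hHMreal : 2 * ((H ∩ M).card : ℝ) = (q : ℝ) := by
      exact_mod_cast congrArg (Nat.cast : ℕ → ℝ) hHMcard
    have hqnn : (0 : ℝ) ≤ (q : ℝ) := Nat.cast_nonneg _
    have hmq : m * (q : ℝ) ≤ ((H ∩ M).card : ℝ) := by nlinarith
    left
    constructor
    · exact hmq.trans (by exact_mod_cast hHMle)
    · rw [hHcard']
      exact hmq
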